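/- arXiv:2001.10107 — 8 statements merged into one kernel-verified Lean document; each statement's English description precedes it below -/
import Mathlib

section
/- Let A be a C*-algebra and D a C*-subalgebra containing an approximate unit for A. If a ∈ A normalizes D (i.e., a*Da + aDa* ⊆ D), then a*a ∈ D and aa* ∈ D. -/
open Filter Topology

theorem IsClosed.mul_mem_of_mul_mul_mem_of_tendsto {A ι : Type*}
    [NonUnitalSeminormedRing A] {S : Set A} (hS : IsClosed S) {l : Filter ι} [l.NeBot]
    {u : ι → A} {b x : A} (hux : Tendsto (fun i => ‖u i * x - x‖) l (𝓝 0))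
    (hmem : ∀ i, b * u i * x ∈ S) : b * x ∈ S := by
  have hlim : Tendsto (fun i => b * (u i * x)) l (𝓝 (b * x)) :=
    ((continuous_const_mul b).tendsto x).comp (tendsto_iff_norm_sub_tendsto_zero.2 hux)
  exact hS.mem_of_tendsto hlim (Eventually.of_forall fun i => mul_assoc b (u i) x ▸ hmem i)

/-- if `D` is a nondegenerate C*-subalgebra of `A` (i.e. `D` contains an
approximate unit for `A`) and `a` normalizes `D`, then `a*a ∈ D` and `aa* ∈ D`. -/
theorem normalizer_star_self_mem {A : Type*} [NonUnitalCStarAlgebra A]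
    [PartialOrder A] [StarOrderedRing A]
    (D : NonUnitalStarSubalgebra ℂ A) (hD : IsClosed (D : Set A))
    (hunit : ∃ (ι : Type) (l : Filter ι) (u : ι → A), l.NeBot ∧
      (∀ i, u i ∈ D ∧ 0 ≤ u i ∧ ‖u i‖ ≤ 1) ∧
      ∀ x : A, Tendsto (fun i => ‖u i * x - x‖) l (𝓝 0))
    (a : A) (ha : ∀ d ∈ D, star a * d * a ∈ D ∧ a * d * star a ∈ D) :
    star a * a ∈ D ∧ a * star a ∈ D := by
  obtain ⟨ι, l, u, hl, hu, htend⟩ := hunit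
  exact ⟨hD.mul_mem_of_mul_mul_mem_of_tendsto (htend a) fun i => (ha _ (hu i).1).1,
    hD.mul_mem_of_mul_mul_mem_of_tendsto (htend (star a)) fun i => (ha _ (hu i).1).2⟩
end

section
/- Let A be a C*-algebra and D an abelian C*-subalgebra. Let x₁, …, xₙ ∈ A each normalize D, and suppose xᵢ*xⱼ = 0 whenever i ≠ j. Then z = x₁ + ⋯ + xₙ satisfies z*Dz ⊆ D. -/
/-!
For normalizers `x, y` with `x* y = 0` and `c ∈ D`, put `P = c x x* c*` and `Q = c y y* c*`.
`P` is nonnegative and `P² = c (x (x* c* c x) x*) c* ∈ D`, so `P = √(P²) ∈ D`; likewise `Q ∈ D`.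
As `D` is commutative, `(PQ)² = P² Q² = c W_x (c* c) W_y c* = c (c* c) W_x W_y c*` where
`W_x = x x* c* c x x*` and `W_y = y y* c* c y y*` satisfy `W_x W_y = 0` because `x* y = 0`;
hence `PQ = 0`. Then `s = x* (c* c) y` has `(s* s)² = y* c* P Q P c y = 0`, so `s = 0`.
Since `D` is spanned by the elements `c* c`, we get `x* d y = 0` for all `d ∈ D`, which kills
the cross terms of `z* d z`.
-/

open scoped ComplexStarModule

def IsNormalizer {A : Type*} [NonUnitalCStarAlgebra A] (D : NonUnitalStarSubalgebra ℂ A) (x : A) :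
    Prop :=
  ∀ d ∈ D, star x * d * x ∈ D ∧ x * d * star x ∈ D

section
variable {A : Type*} [NonUnitalCStarAlgebra A]

lemma IsSelfAdjoint.eq_zero_of_mul_self_eq_zero {a : A} (ha : IsSelfAdjoint a) (h : a * a = 0) :
    a = 0 := by
  rw [← CStarRing.star_mul_self_eq_zero_iff, ha.star_eq, h]

variable {D : NonUnitalStarSubalgebra ℂ A} [IsClosed (D : Set A)]

lemma CFC.sqrt_mem [PartialOrder A] [StarOrderedRing A] {p : A} (hp : 0 ≤ p) (hpD : p ∈ D) :
    CFC.sqrt p ∈ D := by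
  rw [CFC.sqrt_eq_real_sqrt p]
  exact cfcₙ_mem Real.sqrt hpD

lemma mem_of_nonneg_of_mul_self_mem [PartialOrder A] [StarOrderedRing A] {a : A} (ha : 0 ≤ a)
    (h : a * a ∈ D) : a ∈ D :=
  CFC.sqrt_mul_self a ▸ CFC.sqrt_mem (Commute.mul_nonneg ha ha (.refl a)) h

lemma mem_span_star_mul_self {d : A} (hd : d ∈ D) :
    d ∈ Submodule.span ℂ ((fun c ↦ star c * c) '' (D : Set A)) := by
  let _ := CStarAlgebra.spectralOrder A
  have _ := CStarAlgebra.spectralOrderedRing A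
  have hnonneg {p : A} (hp : 0 ≤ p) (hpD : p ∈ D) :
      p ∈ Submodule.span ℂ ((fun c ↦ star c * c) '' (D : Set A)) := by
    refine Submodule.subset_span ⟨CFC.sqrt p, CFC.sqrt_mem hp hpD, ?_⟩
    simp only [(CFC.sqrt_nonneg p).isSelfAdjoint.star_eq, CFC.sqrt_mul_sqrt_self p]
  have hre : (ℜ d : A) ∈ D := by
    rw [realPart_apply_coe, ← Complex.coe_smul]
    exact SMulMemClass.smul_mem _ (add_mem hd (star_mem hd))
  have him : (ℑ d : A) ∈ D := by
    rw [imaginaryPart_apply_coe, ← Complex.coe_smul]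
    exact SMulMemClass.smul_mem _ (SMulMemClass.smul_mem _ (sub_mem hd (star_mem hd)))
  rw [← CStarAlgebra.linear_combination_nonneg d]
  refine add_mem (sub_mem ?_ ?_) (sub_mem (Submodule.smul_mem _ _ ?_) (Submodule.smul_mem _ _ ?_))
  · exact hnonneg (CFC.posPart_nonneg _) (cfcₙ_mem _ hre)
  · exact hnonneg (CFC.negPart_nonneg _) (cfcₙ_mem _ hre)
  · exact hnonneg (CFC.posPart_nonneg _) (cfcₙ_mem _ him)
  · exact hnonneg (CFC.negPart_nonneg _) (cfcₙ_mem _ him)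

lemma IsNormalizer.mul_mul_star_mul_star_mem {x c : A} (hx : IsNormalizer D x) (hc : c ∈ D) :
    c * x * star x * star c ∈ D := by
  let _ := CStarAlgebra.spectralOrder A
  have _ := CStarAlgebra.spectralOrderedRing A
  refine mem_of_nonneg_of_mul_self_mem ?_ ?_
  · simpa only [star_mul, star_star, mul_assoc] using star_mul_self_nonneg (star x * star c)
  · convert mul_mem (mul_mem hc (hx _ (hx _ (mul_mem (star_mem hc) hc)).1).2) (star_mem hc)
      using 1
    simp only [mul_assoc]

variable (hcomm : ∀ a ∈ D, ∀ b ∈ D, a * b = b * a)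
include hcomm

lemma IsNormalizer.mul_mul_star_mul_star_mul_eq_zero {x y c : A} (hx : IsNormalizer D x)
    (hy : IsNormalizer D y) (hxy : star x * y = 0) (hc : c ∈ D) :
    (c * x * star x * star c) * (c * y * star y * star c) = 0 := by
  set P := c * x * star x * star c
  set Q := c * y * star y * star c
  have hPQ : P * Q = Q * P := hcomm _ (hx.mul_mul_star_mul_star_mem hc) _
    (hy.mul_mul_star_mul_star_mem hc)
  have hsa : IsSelfAdjoint (P * Q) := by
    simp only [IsSelfAdjoint, star_mul, star_star, P, Q, mul_assoc] at hPQ ⊢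
    exact hPQ.symm
  set Wx := x * (star x * (star c * c) * x) * star x
  set Wy := y * (star y * (star c * c) * y) * star y
  have hcc : star c * c ∈ D := mul_mem (star_mem hc) hc
  have hWx : Wx * (star c * c) = star c * c * Wx := hcomm _ (hx _ (hx _ hcc).1).2 _ hcc
  have hWxy : Wx * Wy = 0 := by
    simp only [Wx, Wy, mul_assoc]
    rw [← mul_assoc (star x) y, hxy]
    simp
  refine hsa.eq_zero_of_mul_self_eq_zero ?_
  calc P * Q * (P * Q) = P * P * (Q * Q) := by
        rw [mul_assoc P Q, ← mul_assoc Q, ← hPQ]; simp only [mul_assoc]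
    _ = c * (Wx * (star c * c)) * Wy * star c := by simp only [P, Q, Wx, Wy, mul_assoc]
    _ = 0 := by rw [hWx]; simp only [mul_assoc, hWxy]; simp

lemma IsNormalizer.star_mul_star_mul_self_mul_eq_zero {x y c : A} (hx : IsNormalizer D x)
    (hy : IsNormalizer D y) (hxy : star x * y = 0) (hc : c ∈ D) :
    star x * (star c * c) * y = 0 := by
  set s := star x * (star c * c) * y
  have hss : (star s * s) * (star s * s) = 0 :=
    calc (star s * s) * (star s * s)
        = star y * star c * ((c * x * star x * star c) * (c * y * star y * star c))
          * (c * x * star x * star c) * c * y := by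
          simp only [s, star_mul, star_star, mul_assoc]
      _ = 0 := by rw [hx.mul_mul_star_mul_star_mul_eq_zero hcomm hy hxy hc]; simp
  exact (CStarRing.star_mul_self_eq_zero_iff s).mp
    ((IsSelfAdjoint.star_mul_self s).eq_zero_of_mul_self_eq_zero hss)

lemma IsNormalizer.star_mul_mul_eq_zero {x y d : A} (hx : IsNormalizer D x)
    (hy : IsNormalizer D y) (hxy : star x * y = 0) (hd : d ∈ D) :
    star x * d * y = 0 := by
  suffices Submodule.span ℂ ((fun c ↦ star c * c) '' (D : Set A)) ≤
      LinearMap.ker (LinearMap.mulLeftRight ℂ (star x, y)) from this (mem_span_star_mul_self hd)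
  rw [Submodule.span_le]
  rintro _ ⟨c, hc, rfl⟩
  exact hx.star_mul_star_mul_self_mul_eq_zero hcomm hy hxy hc

end

/-- if `D` is an abelian C*-subalgebra, `x₁,…,xₙ` normalize `D` and
`xᵢ* xⱼ = 0` for `i ≠ j`, then `z = ∑ xᵢ` satisfies `z* D z ⊆ D`. -/
theorem sum_rNormalizer {A : Type*} [NonUnitalCStarAlgebra A]
    (D : NonUnitalStarSubalgebra ℂ A) (hD : IsClosed (D : Set A))
    (hcomm : ∀ x ∈ D, ∀ y ∈ D, x * y = y * x)
    (n : ℕ) (x : Fin n → A)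
    (hx : ∀ i, ∀ d ∈ D, star (x i) * d * x i ∈ D ∧ x i * d * star (x i) ∈ D)
    (horth : ∀ i j, i ≠ j → star (x i) * x j = 0) :
    ∀ d ∈ D, star (∑ i, x i) * d * (∑ i, x i) ∈ D := by
  intro d hd
  rw [star_sum, Finset.sum_mul, Finset.sum_mul]
  refine sum_mem fun i _ ↦ ?_
  rw [Finset.mul_sum]
  refine sum_mem fun j _ ↦ ?_
  obtain rfl | hij := eq_or_ne i j
  · exact (hx i d hd).1
  · rw [IsNormalizer.star_mul_mul_eq_zero hcomm (hx i) (hx j) (horth i j hij) hd]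
    exact zero_mem D
end

section
/- Let A be a C*-algebra, D an abelian C*-subalgebra of A, and let x, y ∈ A be normalizers of D with x*y = 0. Then for every d ∈ D, x*dy = 0. -/
/-! With `a = d y`, the element `a a⋆ a a⋆ = d (y (a⋆a) y⋆) d⋆` has its middle factor in `D`,
since `y` normalizes `D`; commutativity of `D` moves `d⋆` to the front, so
`a a⋆ a a⋆ = d⋆ d y (a⋆a) y⋆` ends in `y⋆` and is killed on the right by `x` because `y⋆ x = 0`.
Thus `(x⋆ a a⋆)(x⋆ a a⋆)⋆ = 0`, and the C⋆-identity gives `x⋆ a a⋆ = 0`, then `x⋆ a = 0`. -/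

lemma CStarRing.mul_eq_zero_of_mul_mul_star_eq_zero {A : Type*}
    [NonUnitalNormedRing A] [StarRing A] [CStarRing A] {z a : A}
    (h : z * a * star a = 0) : z * a = 0 := by
  rw [← mul_star_self_eq_zero_iff, star_mul, ← mul_assoc, h, zero_mul]

lemma NonUnitalStarSubalgebra.mul_mul_star_mul_self_eq_of_normalizes {R A : Type*}
    [CommSemiring R] [NonUnitalSemiring A] [StarRing A] [Module R A]
    (D : NonUnitalStarSubalgebra R A) (hcomm : ∀ x ∈ D, ∀ y ∈ D, x * y = y * x) {y : A}
    (hy : ∀ d ∈ D, star y * d * y ∈ D ∧ y * d * star y ∈ D) {d : A} (hd : d ∈ D) :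
    d * y * star (d * y) * (d * y * star (d * y)) =
      star d * d * y * (star (d * y) * (d * y)) * star y := by
  have hmid : y * (star (d * y) * (d * y)) * star y ∈ D := by
    refine (hy _ ?_).2
    simpa only [star_mul, mul_assoc] using (hy _ (mul_mem (star_mem hd) hd)).1
  calc d * y * star (d * y) * (d * y * star (d * y))
        = d * (y * (star (d * y) * (d * y)) * star y) * star d := by
          simp only [star_mul, mul_assoc]
    _ = star d * (d * (y * (star (d * y) * (d * y)) * star y)) :=
          hcomm _ (mul_mem hd hmid) _ (star_mem hd)
    _ = star d * d * y * (star (d * y) * (d * y)) * star y := by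
          simp only [mul_assoc]

theorem orthogonal_normalizers_mixed_product_general {A : Type*} [NonUnitalCStarAlgebra A]
    (D : NonUnitalStarSubalgebra ℂ A)
    (hcomm : ∀ x ∈ D, ∀ y ∈ D, x * y = y * x)
    (x y : A)
    (hy : ∀ d ∈ D, star y * d * y ∈ D ∧ y * d * star y ∈ D)
    (horth : star x * y = 0) :
    ∀ d ∈ D, star x * d * y = 0 := by
  intro d hd
  have hyx : star y * x = 0 := by simpa using congrArg star horth
  rw [mul_assoc]
  apply CStarRing.mul_eq_zero_of_mul_mul_star_eq_zero
  rw [← CStarRing.mul_star_self_eq_zero_iff]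
  calc star x * (d * y) * star (d * y) * star (star x * (d * y) * star (d * y))
      = star x * (d * y * star (d * y) * (d * y * star (d * y))) * x := by
        simp only [star_mul, star_star, mul_assoc]
    _ = 0 := by
        rw [D.mul_mul_star_mul_self_eq_of_normalizes hcomm hy hd]
        simp only [mul_assoc, hyx, mul_zero]

/-- if `D` is an abelian C*-subalgebra and `x, y` are normalizers of `D`
with `x* y = 0`, then `x* d y = 0` for every `d ∈ D`. -/
theorem orthogonal_normalizers_mixed_product {A : Type*} [NonUnitalCStarAlgebra A]
    (D : NonUnitalStarSubalgebra ℂ A) (hD : IsClosed (D : Set A))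
    (hcomm : ∀ x ∈ D, ∀ y ∈ D, x * y = y * x)
    (x y : A)
    (hx : ∀ d ∈ D, star x * d * x ∈ D ∧ x * d * star x ∈ D)
    (hy : ∀ d ∈ D, star y * d * y ∈ D ∧ y * d * star y ∈ D)
    (horth : star x * y = 0) :
    ∀ d ∈ D, star x * d * y = 0 :=
  orthogonal_normalizers_mixed_product_general D hcomm x y hy horth
end

section
/- A matrix a in Mₙ(ℂ) normalizes the diagonal subalgebra Dₙ (i.e., a*Dₙa + aDₙa* ⊆ Dₙ) if and only if a has at most one nonzero entry in each row and at most one nonzero entry in each column. -/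
namespace Matrix

variable {n R : Type*} [Fintype n] [DecidableEq n]

lemma star_mul_diagonal_mul_apply [NonUnitalSemiring R] [Star R] (a : Matrix n n R) (f : n → R)
    (p q : n) : (star a * diagonal f * a) p q = ∑ x, star (a x p) * f x * a x q := by
  simp [mul_apply, diagonal_apply, star_apply, mul_ite]

variable [Semiring R] [StarAddMonoid R] [NoZeroDivisors R]

lemma isDiag_star_mul_diagonal_mul_iff (a : Matrix n n R) :
    (∀ f : n → R, (star a * diagonal f * a).IsDiag) ↔ ∀ i, {j | a i j ≠ 0}.Subsingleton := by
  refine ⟨fun h i j hj k hk ↦ ?_, fun h f p q hpq ↦ ?_⟩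
  · by_contra hjk
    -- Conjugating the matrix unit `Eᵢᵢ` gives the entry `star (a i j) * a i k` at `(j, k)`.
    have hjk : (star a * diagonal (Pi.single i 1) * a : Matrix n n R) j k = 0 := h _ hjk
    rw [star_mul_diagonal_mul_apply, Finset.sum_eq_single i (by simp_all) (by simp),
      Pi.single_eq_same, mul_one] at hjk
    exact mul_ne_zero (star_ne_zero.2 hj) hk hjk
  · change (star a * diagonal f * a) p q = 0
    rw [star_mul_diagonal_mul_apply]
    refine Finset.sum_eq_zero fun x _ ↦ ?_
    by_cases hp : a x p = 0
    · simp [hp]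
    by_cases hq : a x q = 0
    · simp [hq]
    exact absurd (h x hp hq) hpq

lemma isDiag_star_mul_mul_iff (a : Matrix n n R) :
    (∀ d : Matrix n n R, d.IsDiag → (star a * d * a).IsDiag) ↔
      ∀ i, {j | a i j ≠ 0}.Subsingleton := by
  rw [← isDiag_star_mul_diagonal_mul_iff]
  exact ⟨fun h f ↦ h _ (isDiag_diagonal f), fun h d hd ↦ hd.diagonal_diag ▸ h d.diag⟩

end Matrix

/-- a matrix in `Mₙ(ℂ)` normalizes the diagonal subalgebra iff it has at
most one nonzero entry in each row and each column. -/
theorem matrix_normalizes_diagonal_iff (n : ℕ) (a : Matrix (Fin n) (Fin n) ℂ) :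
    (∀ d : Matrix (Fin n) (Fin n) ℂ, d.IsDiag →
      (star a * d * a).IsDiag ∧ (a * d * star a).IsDiag) ↔
    ((∀ i, {j | a i j ≠ 0}.Subsingleton) ∧ (∀ j, {i | a i j ≠ 0}.Subsingleton)) := by
  simp only [forall_and]
  refine and_congr (Matrix.isDiag_star_mul_mul_iff a) ?_
  -- `a * d * star a = star b * d * b` for `b = star a`, whose rows are the columns of `a`.
  simpa [Matrix.star_apply] using Matrix.isDiag_star_mul_mul_iff (star a)
end

section
/- Let (D_A ⊆ A) and (D_B ⊆ B) be sub-C*-algebras with (D_B ⊆ B) nondegenerate, and let φ : A → B be a positive linear map. If φ maps normalizers of D_A to normalizers of D_B, then φ(D_A) ⊆ D_B. -/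
/-!
A closed *-subalgebra is closed under the continuous functional calculus, so every element of `D_A`
is a linear combination of four positive elements of `D_A` (real and imaginary parts, each split
into positive and negative parts). It therefore suffices to treat `p ∈ D_A` positive. Such a `p`
normalizes `D_A`, so `b = φ p` is a positive normalizer of `D_B`; then `b u_i b ∈ D_B` tends to
`b²` along an approximate unit `u_i ∈ D_B`, whence `b² ∈ D_B` and `b = √(b²) ∈ D_B`.
-/

open Filter Topology ComplexStarModule

section StarSubalgebra

variable {A : Type*} [NonUnitalCStarAlgebra A] {S : NonUnitalStarSubalgebra ℂ A}

theorem NonUnitalStarSubalgebra.realPart_mem {a : A} (ha : a ∈ S) : (ℜ a : A) ∈ S := by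
  rw [realPart_apply_coe, ← Complex.coe_smul]
  exact SMulMemClass.smul_mem _ (add_mem ha (star_mem ha))

theorem NonUnitalStarSubalgebra.imaginaryPart_mem {a : A} (ha : a ∈ S) : (ℑ a : A) ∈ S := by
  rw [imaginaryPart_apply_coe, ← Complex.coe_smul]
  exact SMulMemClass.smul_mem _ (SMulMemClass.smul_mem _ (sub_mem ha (star_mem ha)))

variable [PartialOrder A] [StarOrderedRing A]

theorem LinearMap.map_mem_of_map_nonneg_mem {B T : Type*} [AddCommGroup B] [Module ℂ B]
    [SetLike T B] [AddSubgroupClass T B] [SMulMemClass T ℂ B] {N : T} (φ : A →ₗ[ℂ] B)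
    (hS : IsClosed (S : Set A)) (h : ∀ a ∈ S, 0 ≤ a → φ a ∈ N) {a : A} (ha : a ∈ S) :
    φ a ∈ N := by
  have : IsClosed (S : Set A) := hS
  have map_selfAdjoint_mem : ∀ x ∈ S, IsSelfAdjoint x → φ x ∈ N := fun x hx hsa => by
    rw [← CFC.posPart_sub_negPart x hsa, map_sub]
    exact sub_mem (h _ (cfcₙ_mem _ hx) (CFC.posPart_nonneg x))
      (h _ (cfcₙ_mem _ hx) (CFC.negPart_nonneg x))
  rw [← realPart_add_I_smul_imaginaryPart a, map_add, map_smul]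
  exact add_mem (map_selfAdjoint_mem _ (S.realPart_mem ha) (ℜ a).2)
    (SMulMemClass.smul_mem _ (map_selfAdjoint_mem _ (S.imaginaryPart_mem ha) (ℑ a).2))

theorem NonUnitalStarSubalgebra.mem_of_nonneg_of_mul_self_mem (hS : IsClosed (S : Set A))
    {b : A} (hb : 0 ≤ b) (hbb : b * b ∈ S) : b ∈ S := by
  have : IsClosed (S : Set A) := hS
  rw [← CFC.sqrt_mul_self b hb, CFC.sqrt_eq_real_sqrt (b * b)]
  exact cfcₙ_mem _ hbb

end StarSubalgebra

theorem star_mul_self_mem_of_tendsto_mul {B ι : Type*} [NonUnitalSemiring B] [Star B]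
    [TopologicalSpace B] [ContinuousMul B] {S : Set B} (hS : IsClosed S) {l : Filter ι} [l.NeBot]
    {u : ι → B} (hu : ∀ i, u i ∈ S) {b : B} (hb : ∀ d ∈ S, star b * d * b ∈ S)
    (hlim : Tendsto (fun i => u i * b) l (𝓝 b)) : star b * b ∈ S :=
  hS.mem_of_tendsto (hlim.const_mul (star b))
    (Eventually.of_forall fun i => mul_assoc (star b) (u i) b ▸ hb _ (hu i))

/-- a positive linear map between sub-C*-algebras which maps normalizers to
normalizers maps `D_A` into `D_B`, provided `(D_B ⊆ B)` is nondegenerate. -/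
theorem positive_normalizer_preserving_maps_subalgebra
    {A B : Type*} [NonUnitalCStarAlgebra A] [NonUnitalCStarAlgebra B]
    [PartialOrder A] [StarOrderedRing A] [PartialOrder B] [StarOrderedRing B]
    (DA : NonUnitalStarSubalgebra ℂ A) (hDA : IsClosed (DA : Set A))
    (DB : NonUnitalStarSubalgebra ℂ B) (hDB : IsClosed (DB : Set B))
    (hunit : ∃ (ι : Type) (l : Filter ι) (u : ι → B), l.NeBot ∧
      (∀ i, u i ∈ DB ∧ 0 ≤ u i ∧ ‖u i‖ ≤ 1) ∧
      ∀ x : B, Tendsto (fun i => ‖u i * x - x‖) l (𝓝 0))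
    (φ : A →ₗ[ℂ] B) (hpos : ∀ a : A, 0 ≤ a → 0 ≤ φ a)
    (hφ : ∀ a : A, (∀ d ∈ DA, star a * d * a ∈ DA ∧ a * d * star a ∈ DA) →
      (∀ d ∈ DB, star (φ a) * d * φ a ∈ DB ∧ φ a * d * star (φ a) ∈ DB)) :
    ∀ d ∈ DA, φ d ∈ DB := by
  obtain ⟨ι, l, u, hl, hu, hlim⟩ := hunit
  refine fun d hd => φ.map_mem_of_map_nonneg_mem hDA (fun p hp hp0 => ?_) hd
  have hb : 0 ≤ φ p := hpos p hp0
  have hnormalizer := hφ p fun d hd =>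
    ⟨mul_mem (mul_mem (star_mem hp) hd) hp, mul_mem (mul_mem hp hd) (star_mem hp)⟩
  have hbb : star (φ p) * φ p ∈ DB :=
    star_mul_self_mem_of_tendsto_mul hDB (fun i => (hu i).1) (fun d hd => (hnormalizer d hd).1)
      (tendsto_iff_norm_sub_tendsto_zero.mpr (hlim (φ p)))
  rw [hb.isSelfAdjoint.star_eq] at hbb
  exact DB.mem_of_nonneg_of_mul_self_mem hDB hb hbb
end

section
/- Let (D_A ⊆ A) and (D_B ⊆ B) be nondegenerate sub-C*-algebras and let φ : A → B be a *-homomorphism with φ(N_A(D_A)) = N_B(D_B). Then φ(D_A) = D_B. -/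
/-!
For a normalizer `a` of a closed nondegenerate `D`, approximating `a*a` by `a* u_i a` with an
approximate unit `u_i ∈ D` shows `a*a ∈ D`, hence `|a| = (a*a)^{1/2} ∈ D`. Since `D` is contained
in its normalizers and a nonnegative element is its own absolute value, `φ` maps the nonnegative
elements of `D_A` into `D_B`, and every nonnegative `φ a ∈ D_B` equals `φ |a|` with `|a| ∈ D_A`.
Both closed subalgebras are spanned by their nonnegative elements, which gives the two inclusions.
-/

open Filter Topology
open scoped ComplexStarModule

lemma map_cfcAbs {F A B : Type*} [NonUnitalCStarAlgebra A] [NonUnitalCStarAlgebra B]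
    [PartialOrder A] [StarOrderedRing A] [PartialOrder B] [StarOrderedRing B]
    [FunLike F A B] [NonUnitalAlgHomClass F ℂ A B] [StarHomClass F A B] (φ : F) (a : A) :
    φ (CFC.abs a) = CFC.abs (φ a) :=
  (CFC.sqrt_unique (by rw [← map_mul, CFC.abs_mul_abs, map_mul, map_star])
    (map_nonneg φ (CFC.abs_nonneg a))).symm

namespace NonUnitalStarSubalgebra

variable {A : Type*} [NonUnitalCStarAlgebra A]

/-- The set `N_A(D)` of the paper; it is not a subalgebra in general. -/
def normalizers (D : NonUnitalStarSubalgebra ℂ A) : Set A :=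
  {a | ∀ d ∈ D, star a * d * a ∈ D ∧ a * d * star a ∈ D}

variable {D : NonUnitalStarSubalgebra ℂ A}

lemma subset_normalizers : (D : Set A) ⊆ D.normalizers := fun _ ha _ hd =>
  ⟨mul_mem (mul_mem (star_mem ha) hd) ha, mul_mem (mul_mem ha hd) (star_mem ha)⟩

lemma star_mul_self_mem_of_mem_normalizers (hD : IsClosed (D : Set A)) {ι : Type*}
    {l : Filter ι} [l.NeBot] {u : ι → A} (hu : ∀ i, u i ∈ D) {a : A}
    (hua : Tendsto (fun i => u i * a) l (𝓝 a)) (ha : a ∈ D.normalizers) : star a * a ∈ D :=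
  hD.mem_of_tendsto (by simpa only [mul_assoc] using hua.const_mul (star a))
    (.of_forall fun i => (ha _ (hu i)).1)

lemma realPart_mem_s8 {x : A} (hx : x ∈ D) : (ℜ x : A) ∈ D := by
  rw [realPart_apply_coe, ← Complex.coe_smul]
  exact SMulMemClass.smul_mem _ (add_mem hx (star_mem hx))

lemma imaginaryPart_mem_s8 {x : A} (hx : x ∈ D) : (ℑ x : A) ∈ D := by
  rw [imaginaryPart_apply_coe, ← Complex.coe_smul]
  exact SMulMemClass.smul_mem _ (SMulMemClass.smul_mem _ (sub_mem hx (star_mem hx)))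

variable [PartialOrder A] [StarOrderedRing A]

lemma cfcAbs_mem (hD : IsClosed (D : Set A)) {a : A} (ha : star a * a ∈ D) :
    CFC.abs a ∈ D := by
  rw [CFC.abs, CFC.sqrt_eq_real_sqrt _ (star_mul_self_nonneg a)]
  exact cfcₙ_mem (hs := hD) _ ha

lemma cfcAbs_mem_of_mem_normalizers (hD : IsClosed (D : Set A)) {ι : Type*}
    {l : Filter ι} [l.NeBot] {u : ι → A} (hu : ∀ i, u i ∈ D) {a : A}
    (hua : Tendsto (fun i => u i * a) l (𝓝 a)) (ha : a ∈ D.normalizers) : CFC.abs a ∈ D :=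
  cfcAbs_mem hD (star_mul_self_mem_of_mem_normalizers hD hu hua ha)

lemma le_of_forall_nonneg_mem (hD : IsClosed (D : Set A)) {S : NonUnitalStarSubalgebra ℂ A}
    (hS : ∀ x ∈ D, 0 ≤ x → x ∈ S) : D ≤ S := by
  intro x hx
  have hpos {y : A} (hy : y ∈ D) : y⁺ ∈ S :=
    hS _ (cfcₙ_mem (hs := hD) (· ⁺ : ℝ → ℝ) hy) (CFC.posPart_nonneg y)
  have hneg {y : A} (hy : y ∈ D) : y⁻ ∈ S :=
    hS _ (cfcₙ_mem (hs := hD) (· ⁻ : ℝ → ℝ) hy) (CFC.negPart_nonneg y)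
  rw [← CStarAlgebra.linear_combination_nonneg x]
  exact add_mem (sub_mem (hpos (realPart_mem_s8 hx)) (hneg (realPart_mem_s8 hx)))
    (sub_mem (SMulMemClass.smul_mem _ (hpos (imaginaryPart_mem_s8 hx)))
      (SMulMemClass.smul_mem _ (hneg (imaginaryPart_mem_s8 hx))))

end NonUnitalStarSubalgebra

/-- a *-homomorphism between nondegenerate sub-C*-algebras which maps the
normalizer set onto the normalizer set maps `D_A` onto `D_B`. -/
theorem starHom_normalizer_preserving_image_eq
    {A B : Type*} [NonUnitalCStarAlgebra A] [NonUnitalCStarAlgebra B]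
    [PartialOrder A] [StarOrderedRing A] [PartialOrder B] [StarOrderedRing B]
    (DA : NonUnitalStarSubalgebra ℂ A) (hDA : IsClosed (DA : Set A))
    (DB : NonUnitalStarSubalgebra ℂ B) (hDB : IsClosed (DB : Set B))
    (hunitA : ∃ (ι : Type) (l : Filter ι) (u : ι → A), l.NeBot ∧
      (∀ i, u i ∈ DA ∧ 0 ≤ u i ∧ ‖u i‖ ≤ 1) ∧
      ∀ x : A, Tendsto (fun i => ‖u i * x - x‖) l (𝓝 0))
    (hunitB : ∃ (ι : Type) (l : Filter ι) (u : ι → B), l.NeBot ∧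
      (∀ i, u i ∈ DB ∧ 0 ≤ u i ∧ ‖u i‖ ≤ 1) ∧
      ∀ x : B, Tendsto (fun i => ‖u i * x - x‖) l (𝓝 0))
    (φ : A →⋆ₙₐ[ℂ] B)
    (hφ : φ '' {a : A | ∀ d ∈ DA, star a * d * a ∈ DA ∧ a * d * star a ∈ DA}
        = {b : B | ∀ d ∈ DB, star b * d * b ∈ DB ∧ b * d * star b ∈ DB}) :
    φ '' (DA : Set A) = (DB : Set B) := by
  change φ '' DA.normalizers = DB.normalizers at hφ
  obtain ⟨_, _, uA, _, huA, happroxA⟩ := hunitA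
  obtain ⟨_, _, uB, _, huB, happroxB⟩ := hunitB
  have absA {a : A} (ha : a ∈ DA.normalizers) : CFC.abs a ∈ DA :=
    NonUnitalStarSubalgebra.cfcAbs_mem_of_mem_normalizers hDA (fun i => (huA i).1)
      (tendsto_iff_norm_sub_tendsto_zero.2 (happroxA a)) ha
  have absB {b : B} (hb : b ∈ DB.normalizers) : CFC.abs b ∈ DB :=
    NonUnitalStarSubalgebra.cfcAbs_mem_of_mem_normalizers hDB (fun i => (huB i).1)
      (tendsto_iff_norm_sub_tendsto_zero.2 (happroxB b)) hb
  have hDA_le : DA ≤ DB.comap φ := DA.le_of_forall_nonneg_mem hDA fun p hp hp₀ => by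
    have hφp : φ p ∈ DB.normalizers := hφ ▸ ⟨p, DA.subset_normalizers hp, rfl⟩
    exact (CFC.abs_of_nonneg (φ p) (map_nonneg φ hp₀) ▸ absB hφp : φ p ∈ DB)
  have hDB_le : DB ≤ DA.map φ := DB.le_of_forall_nonneg_mem hDB fun q hq hq₀ => by
    obtain ⟨a, ha, rfl⟩ : q ∈ φ '' DA.normalizers := hφ ▸ DB.subset_normalizers hq
    exact NonUnitalStarSubalgebra.mem_map.2
      ⟨CFC.abs a, absA ha, by rw [map_cfcAbs φ, CFC.abs_of_nonneg (φ a) hq₀]⟩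
  rw [← NonUnitalStarSubalgebra.coe_map, SetLike.coe_set_eq]
  exact le_antisymm (NonUnitalStarSubalgebra.map_le.2 hDA_le) hDB_le
end

section
/- Let A be a C*-algebra, D a C*-subalgebra, and let x = (x_{ij}) ∈ Mₙ(A). Then x satisfies x*(Dₙ ⊗ D)x ⊆ Dₙ ⊗ D (x is an r-normalizer of the diagonal subalgebra Dₙ ⊗ D in Mₙ(A)) if and only if (a) each entry x_{ij} satisfies x_{ij}*Dx_{ij} ⊆ D, and (b) for all i ≠ j, all k, and all a ∈ D, x_{ki}* a x_{kj} = 0. -/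
open Matrix

theorem Matrix.conjTranspose_mul_diagonal_mul_apply {m n α : Type*} [Fintype m] [DecidableEq m]
    [NonUnitalSemiring α] [Star α] (x : Matrix m n α) (d : m → α) (i j : n) :
    (xᴴ * diagonal d * x) i j = ∑ k, star (x k i) * d k * x k j := by
  simp only [mul_apply (M := xᴴ * diagonal d), mul_diagonal, conjTranspose_apply]

theorem Matrix.conjTranspose_mul_diagonal_single_mul_apply {m n α : Type*} [Fintype m]
    [DecidableEq m] [NonUnitalSemiring α] [Star α] (x : Matrix m n α) (k : m) (a : α) (i j : n) :
    (xᴴ * diagonal (Pi.single k a) * x) i j = star (x k i) * a * x k j := by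
  rw [conjTranspose_mul_diagonal_mul_apply, Finset.sum_eq_single k (fun l _ hl => by simp [hl])
    (by simp)]
  simp

theorem matrix_rNormalizer_iff_general {A : Type*} [NonUnitalCStarAlgebra A]
    (D : NonUnitalStarSubalgebra ℂ A)
    (n : ℕ) (x : Matrix (Fin n) (Fin n) A) :
    (∀ b : Matrix (Fin n) (Fin n) A, (∀ i, b i i ∈ D) → (∀ i j, i ≠ j → b i j = 0) →
      (∀ i, (star x * b * x) i i ∈ D) ∧ (∀ i j, i ≠ j → (star x * b * x) i j = 0)) ↔
    ((∀ i j, ∀ d ∈ D, star (x i j) * d * x i j ∈ D) ∧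
     (∀ i j k, i ≠ j → ∀ a ∈ D, star (x k i) * a * x k j = 0)) := by
  rw [star_eq_conjTranspose]
  constructor
  · intro h
    have hsingle : ∀ k, ∀ a ∈ D, (∀ i, star (x k i) * a * x k i ∈ D) ∧
        ∀ i j, i ≠ j → star (x k i) * a * x k j = 0 := by
      intro k a ha
      have hmem : ∀ i, diagonal (Pi.single k a) i i ∈ D := fun i => by
        rcases eq_or_ne i k with rfl | hik <;> simp [*]
      simpa only [conjTranspose_mul_diagonal_single_mul_apply] using
        h _ hmem (isDiag_diagonal _)
    exact ⟨fun i j d hd => (hsingle i d hd).1 j, fun i j k hij a ha => (hsingle k a ha).2 i j hij⟩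
  · rintro ⟨hentry, horth⟩ b hdiag hoff
    rw [← IsDiag.diagonal_diag (show b.IsDiag from hoff)]
    simp only [conjTranspose_mul_diagonal_mul_apply, diag_apply]
    exact ⟨fun i => sum_mem fun k _ => hentry k i _ (hdiag k),
      fun i j hij => Finset.sum_eq_zero fun k _ => horth i j k hij _ (hdiag k)⟩

/-- a matrix `x ∈ Mₙ(A)` is an r-normalizer of the diagonal subalgebra
`Dₙ ⊗ D` iff each entry is an r-normalizer of `D` and the columns are `D`-orthogonal. -/
theorem matrix_rNormalizer_iff {A : Type*} [NonUnitalCStarAlgebra A]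
    (D : NonUnitalStarSubalgebra ℂ A) (hD : IsClosed (D : Set A))
    (n : ℕ) (x : Matrix (Fin n) (Fin n) A) :
    (∀ b : Matrix (Fin n) (Fin n) A, (∀ i, b i i ∈ D) → (∀ i j, i ≠ j → b i j = 0) →
      (∀ i, (star x * b * x) i i ∈ D) ∧ (∀ i j, i ≠ j → (star x * b * x) i j = 0)) ↔
    ((∀ i j, ∀ d ∈ D, star (x i j) * d * x i j ∈ D) ∧
     (∀ i j k, i ≠ j → ∀ a ∈ D, star (x k i) * a * x k j = 0)) :=
  matrix_rNormalizer_iff_general D n x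
end

section
/- Let G be a countable discrete group, X a compact Hausdorff space, α : G ↷ X an action by homeomorphisms, and let ≺ denote dynamical subequivalence: for closed F and open V, F ≺ V iff there are open U₁,…,Uₙ covering F and group elements s₁,…,sₙ such that s₁U₁,…,sₙUₙ are pairwise disjoint subsets of V. Prove transitivity in the following form: if F is closed, O is open with F ≺ O, and every closed subset of O is ≺ V for an open set V, then F ≺ V. -/
/-!
If `F ⊆ ⋃ Uᵢ` with the `sᵢUᵢ` disjoint in `O`, shrink the `Uᵢ` to closed `Cᵢ` still covering `F`;
then `K = ⋃ sᵢCᵢ` is a closed subset of `O`, so `K ≺ V` via opens `Wⱼ` and elements `tⱼ`.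
The sets `Uᵢ ∩ sᵢ⁻¹Wⱼ` cover `F`, and their translates by `tⱼsᵢ` are `tⱼ(sᵢUᵢ ∩ Wⱼ)`,
which are pairwise disjoint subsets of `V`.
-/

open scoped Pointwise

/-- Dynamical subequivalence of Kerr: `F ≺ V` iff there are finitely many open sets
`U₁,…,Uₙ` covering `F` and group elements `s₁,…,sₙ` such that the translates `sᵢUᵢ` are
pairwise disjoint subsets of `V`. -/
def DynSubeq (G : Type*) {X : Type*} [Group G] [MulAction G X] [TopologicalSpace X]
    (F V : Set X) : Prop :=
  ∃ (n : ℕ) (U : Fin n → Set X) (s : Fin n → G),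
    (∀ i, IsOpen (U i)) ∧ F ⊆ ⋃ i, U i ∧
    (Pairwise fun i j => Disjoint (s i • U i) (s j • U j)) ∧
    ∀ i, s i • U i ⊆ V

theorem mul_smul_inter_inv_smul {G X : Type*} [Group G] [MulAction G X] (t s : G)
    (U W : Set X) : (t * s) • (U ∩ s⁻¹ • W) = t • (s • U ∩ W) := by
  rw [mul_smul, Set.smul_set_inter, smul_inv_smul]

section

variable {G X : Type*} [Group G] [MulAction G X] [TopologicalSpace X]

theorem dynSubeq_of_finite {ι : Type*} [Finite ι] {F V : Set X} (U : ι → Set X) (s : ι → G)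
    (hU : ∀ i, IsOpen (U i)) (hFU : F ⊆ ⋃ i, U i)
    (hdisj : Pairwise fun i j => Disjoint (s i • U i) (s j • U j)) (hV : ∀ i, s i • U i ⊆ V) :
    DynSubeq G F V := by
  obtain ⟨n, ⟨e⟩⟩ := Finite.exists_equiv_fin ι
  refine ⟨n, U ∘ e.symm, s ∘ e.symm, fun k => hU _, ?_, fun k l hkl => hdisj ?_,
    fun k => hV _⟩
  · rwa [Function.comp_def, e.symm.surjective.iUnion_comp U]
  · exact e.symm.injective.ne hkl

theorem DynSubeq.of_cover_inter_inv_smul [ContinuousConstSMul G X] {n : ℕ}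
    {U : Fin n → Set X} {s : Fin n → G} {F K V : Set X} (hU : ∀ i, IsOpen (U i))
    (hdisj : Pairwise fun i j => Disjoint (s i • U i) (s j • U j))
    (hFK : F ⊆ ⋃ i, U i ∩ (s i)⁻¹ • K) (hKV : DynSubeq G K V) : DynSubeq G F V := by
  obtain ⟨m, W, t, hW, hKW, hWdisj, hWV⟩ := hKV
  refine dynSubeq_of_finite (fun p : Fin n × Fin m => U p.1 ∩ (s p.1)⁻¹ • W p.2)
    (fun p => t p.2 * s p.1) (fun p => (hU _).inter ((hW _).smul _)) ?_ ?_ ?_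
  · intro x hx
    obtain ⟨i, hxU, hxK⟩ := Set.mem_iUnion.1 (hFK hx)
    obtain ⟨j, hxW⟩ := Set.mem_iUnion.1 (hKW (Set.mem_inv_smul_set_iff.1 hxK))
    exact Set.mem_iUnion.2 ⟨(i, j), hxU, Set.mem_inv_smul_set_iff.2 hxW⟩
  · rintro ⟨i, j⟩ ⟨i', j'⟩ hne
    simp only [mul_smul_inter_inv_smul]
    by_cases hj : j = j'
    · subst hj
      have hi : i ≠ i' := fun hi => hne (by rw [hi])
      exact (Set.disjoint_image_iff (MulAction.injective (t j))).2
        ((hdisj hi).mono Set.inter_subset_left Set.inter_subset_left)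
    · exact (hWdisj hj).mono (Set.smul_set_mono Set.inter_subset_right)
        (Set.smul_set_mono Set.inter_subset_right)
  · rintro ⟨i, j⟩
    rw [mul_smul_inter_inv_smul]
    exact (Set.smul_set_mono Set.inter_subset_right).trans (hWV j)

theorem DynSubeq.exists_isClosed_translate_cover [NormalSpace X] [ContinuousConstSMul G X]
    {F O : Set X} (hF : IsClosed F) (h : DynSubeq G F O) :
    ∃ (n : ℕ) (U : Fin n → Set X) (s : Fin n → G) (K : Set X), (∀ i, IsOpen (U i)) ∧
      (Pairwise fun i j => Disjoint (s i • U i) (s j • U j)) ∧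
      IsClosed K ∧ K ⊆ O ∧ F ⊆ ⋃ i, U i ∩ (s i)⁻¹ • K := by
  obtain ⟨n, U, s, hU, hFU, hdisj, hUO⟩ := h
  obtain ⟨C, hFC, hC, hCU⟩ :=
    exists_subset_iUnion_closed_subset hF hU (fun _ _ => Set.toFinite _) hFU
  refine ⟨n, U, s, ⋃ i, s i • C i, hU, hdisj, isClosed_iUnion_of_finite fun i => (hC i).smul _,
    Set.iUnion_subset fun i => (Set.smul_set_mono (hCU i)).trans (hUO i), fun x hx => ?_⟩
  obtain ⟨i, hxC⟩ := Set.mem_iUnion.1 (hFC hx)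
  exact Set.mem_iUnion.2 ⟨i, hCU i hxC, Set.mem_inv_smul_set_iff.2
    (Set.mem_iUnion.2 ⟨i, Set.smul_mem_smul_set hxC⟩)⟩

end

theorem dynSubeq_trans_general {G X : Type*} [Group G]
    [TopologicalSpace X] [CompactSpace X] [T2Space X] [MulAction G X]
    (hcont : ∀ g : G, Continuous fun x : X => g • x)
    (F O V : Set X) (hF : IsClosed F)
    (h1 : DynSubeq G F O)
    (h2 : ∀ F' : Set X, IsClosed F' → F' ⊆ O → DynSubeq G F' V) :
    DynSubeq G F V := by
  have : ContinuousConstSMul G X := ⟨hcont⟩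
  obtain ⟨n, U, s, K, hU, hdisj, hK, hKO, hFK⟩ := h1.exists_isClosed_translate_cover hF
  exact DynSubeq.of_cover_inter_inv_smul hU hdisj hFK (h2 K hK hKO)

/-- transitivity of dynamical subequivalence: if `F` is closed, `O` open
with `F ≺ O`, and every closed subset of `O` is `≺ V`, then `F ≺ V`. -/
theorem dynSubeq_trans {G X : Type*} [Group G] [Countable G]
    [TopologicalSpace X] [CompactSpace X] [T2Space X] [MulAction G X]
    (hcont : ∀ g : G, Continuous fun x : X => g • x)
    (F O V : Set X) (hF : IsClosed F) (hO : IsOpen O) (hV : IsOpen V)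
    (h1 : DynSubeq G F O)
    (h2 : ∀ F' : Set X, IsClosed F' → F' ⊆ O → DynSubeq G F' V) :
    DynSubeq G F V :=
  dynSubeq_trans_general hcont F O V hF h1 h2
end
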